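/- Let G be a topological group with finitely many connected components acting cocompactly (by left translations, say via quotient) on itself modulo a discrete subgroup Γ, i.e., G/Γ is compact. Then for the identity component G⁰, the subgroup Γ₀ := Γ ∩ G⁰ satisfies that G⁰/Γ₀ is compact. -/

import Mathlib

/-! Since `G` has finitely many connected components, the identity component `G⁰` is an open
subgroup. For an open subgroup `H`, the natural injection `H ⧸ (Γ ∩ H) → G ⧸ Γ` is an open map,
and its image, the image of `H * Γ`, is closed because the complement of `H * Γ` is again a union
of cosets `H * g` of the open subgroup `H`. So `H ⧸ (Γ ∩ H)` is homeomorphic to a closed subset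
of the compact space `G ⧸ Γ`. -/

open Topology
open scoped Pointwise

instance ConnectedComponents.instT1Space {X : Type*} [TopologicalSpace X] :
    T1Space (ConnectedComponents X) :=
  ⟨ConnectedComponents.surjective_coe.forall.2 fun x => by
    rw [← ConnectedComponents.isQuotientMap_coe.isClosed_preimage,
      connectedComponents_preimage_singleton]
    exact isClosed_connectedComponent⟩

theorem isOpen_connectedComponent_of_finite {X : Type*} [TopologicalSpace X]
    [Finite (ConnectedComponents X)] (x : X) : IsOpen (connectedComponent x) :=
  ConnectedComponents.discreteTopology_iff.1 inferInstance x

namespace Subgroup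

variable {G : Type*} [Group G]

theorem mul_compl_mul_eq_compl (H : Subgroup G) (s : Set G) :
    (H : Set G) * ((H : Set G) * s)ᶜ = ((H : Set G) * s)ᶜ := by
  refine subset_antisymm ?_ fun x hx => ⟨1, H.one_mem, x, hx, one_mul x⟩
  rintro _ ⟨h, hh, x, hx, rfl⟩ ⟨h', hh', y, hy, hxy⟩
  refine hx ⟨h⁻¹ * h', H.mul_mem (H.inv_mem hh) hh', y, hy, ?_⟩
  simp only at hxy ⊢
  rw [mul_assoc, hxy, inv_mul_cancel_left]

def quotientSubgroupOfToQuotient (H Γ : Subgroup G) : H ⧸ Γ.subgroupOf H → G ⧸ Γ :=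
  Quotient.map' Subtype.val fun a b hab => by
    simpa [QuotientGroup.leftRel_apply, mem_subgroupOf] using hab

theorem quotientSubgroupOfToQuotient_injective (H Γ : Subgroup G) :
    Function.Injective (quotientSubgroupOfToQuotient H Γ) := by
  refine Quotient.ind₂' fun a b hab => Quotient.sound' ?_
  simpa [QuotientGroup.leftRel_apply, mem_subgroupOf] using Quotient.exact' hab

theorem range_quotientSubgroupOfToQuotient (H Γ : Subgroup G) :
    Set.range (quotientSubgroupOfToQuotient H Γ) = QuotientGroup.mk '' (H : Set G) := by
  ext z
  constructor
  · rintro ⟨x, rfl⟩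
    induction x using QuotientGroup.induction_on with
    | H h => exact ⟨h, h.2, rfl⟩
  · rintro ⟨g, hg, rfl⟩
    exact ⟨QuotientGroup.mk ⟨g, hg⟩, rfl⟩

variable [TopologicalSpace G]

theorem continuous_quotientSubgroupOfToQuotient (H Γ : Subgroup G) :
    Continuous (quotientSubgroupOfToQuotient H Γ) :=
  continuous_subtype_val.quotient_map' _

variable [IsTopologicalGroup G]

theorem isClosed_mul_of_isOpen {H : Subgroup G} (hH : IsOpen (H : Set G)) (s : Set G) :
    IsClosed ((H : Set G) * s) := by
  rw [← isOpen_compl_iff, ← H.mul_compl_mul_eq_compl]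
  exact hH.mul_right

theorem isOpenMap_quotientSubgroupOfToQuotient {H : Subgroup G} (hH : IsOpen (H : Set G))
    (Γ : Subgroup G) : IsOpenMap (quotientSubgroupOfToQuotient H Γ) := by
  intro U hU
  have himage : quotientSubgroupOfToQuotient H Γ '' U =
      QuotientGroup.mk '' (Subtype.val '' (QuotientGroup.mk ⁻¹' U : Set H)) := by
    conv_lhs => rw [← Set.image_preimage_eq U QuotientGroup.mk_surjective]
    rw [Set.image_image, Set.image_image]
    rfl
  rw [himage]
  exact QuotientGroup.isOpenMap_coe _ (hH.isOpenMap_subtype_val _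
    (hU.preimage QuotientGroup.continuous_mk))

theorem isClosedEmbedding_quotientSubgroupOfToQuotient {H : Subgroup G}
    (hH : IsOpen (H : Set G)) (Γ : Subgroup G) :
    IsClosedEmbedding (quotientSubgroupOfToQuotient H Γ) := by
  refine ⟨(IsOpenEmbedding.of_continuous_injective_isOpenMap
    (continuous_quotientSubgroupOfToQuotient H Γ) (quotientSubgroupOfToQuotient_injective H Γ)
    (isOpenMap_quotientSubgroupOfToQuotient hH Γ)).isEmbedding, ?_⟩
  rw [range_quotientSubgroupOfToQuotient, ← (QuotientGroup.isQuotientMap_mk Γ).isClosed_preimage,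
    QuotientGroup.preimage_image_mk_eq_mul]
  exact isClosed_mul_of_isOpen hH _

theorem compactSpace_quotient_subgroupOf {H : Subgroup G} (hH : IsOpen (H : Set G))
    (Γ : Subgroup G) [CompactSpace (G ⧸ Γ)] : CompactSpace (H ⧸ Γ.subgroupOf H) :=
  (isClosedEmbedding_quotientSubgroupOfToQuotient hH Γ).compactSpace

end Subgroup

theorem stmt1_general {G : Type*} [Group G] [TopologicalSpace G] [IsTopologicalGroup G]
    (hfin : Finite (ConnectedComponents G))
    (Γ : Subgroup G) (hcpt : CompactSpace (G ⧸ Γ)) :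
    CompactSpace ((Subgroup.connectedComponentOfOne G) ⧸
      ((Γ ⊓ Subgroup.connectedComponentOfOne G).subgroupOf
        (Subgroup.connectedComponentOfOne G))) := by
  rw [Subgroup.inf_subgroupOf_right]
  exact Subgroup.compactSpace_quotient_subgroupOf (isOpen_connectedComponent_of_finite 1) Γ

/-- If `Γ` is a discrete subgroup of a topological group `G` with `G ⧸ Γ`
compact, then for the identity component `G⁰` and `Γ₀ = Γ ∩ G⁰`, the quotient `G⁰ ⧸ Γ₀`
is compact. -/
theorem stmt1 {G : Type*} [Group G] [TopologicalSpace G] [IsTopologicalGroup G]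
    (hfin : Finite (ConnectedComponents G))
    (Γ : Subgroup G) [DiscreteTopology Γ] (hcpt : CompactSpace (G ⧸ Γ)) :
    CompactSpace ((Subgroup.connectedComponentOfOne G) ⧸
      ((Γ ⊓ Subgroup.connectedComponentOfOne G).subgroupOf
        (Subgroup.connectedComponentOfOne G))) :=
  stmt1_general hfin Γ hcpt
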